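/- For every real m×n matrix M, the infimum over all m×m real positive definite matrices Γ of ½ (tr(Mᵀ Γ⁻¹ M) + tr(Γ)) equals tr((M Mᵀ)^{1/2}); that is, sInf { ½ (tr(Mᵀ Γ⁻¹ M) + tr(Γ)) : Γ positive definite } = tr((M Mᵀ)^{1/2}). -/

import Mathlib

/-!
Put `S = (M Mᵀ)^{1/2}`, so that `tr (Mᵀ Γ⁻¹ M) = tr (Γ⁻¹ S²)`. For `Γ ≻ 0` the matrix
`(S - Γ) Γ⁻¹ (S - Γ)` is positive semidefinite with trace `tr (Γ⁻¹ S²) - 2 tr S + tr Γ`, so every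
value of the objective is at least `tr S`. For `Γ = S + δ I` one has `Γ⁻¹ S² = S - δ Γ⁻¹ S` and
`tr (Γ⁻¹ S) ≥ 0`, so the objective is at most `tr S + δ m / 2`; letting `δ → 0⁺` shows that `tr S`
is the infimum, although it is not attained when `M Mᵀ` is singular.
-/

open Matrix

/-- Over `ℝ`, `M * Mᵀ` is positive semidefinite. -/
theorem posSemidef_self_mul_transpose {m n : ℕ} (M : Matrix (Fin m) (Fin n) ℝ) :
    (M * Mᵀ).PosSemidef := by
  simpa [Matrix.conjTranspose_eq_transpose_of_trivial] using
    Matrix.posSemidef_self_mul_conjTranspose M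

/-- The square root of a positive semidefinite matrix, as `Matrix.PosSemidef.sqrt` was defined
in the older Mathlib (removed since). -/
noncomputable def Matrix.PosSemidef.sqrt {n : Type*} [Fintype n] [DecidableEq n]
    {A : Matrix n n ℝ} (hA : A.PosSemidef) : Matrix n n ℝ :=
  hA.1.eigenvectorUnitary.1 * diagonal ((↑) ∘ (√·) ∘ hA.1.eigenvalues) *
    (star hA.1.eigenvectorUnitary : Matrix n n ℝ)

namespace Matrix

variable {n : Type*} [Fintype n] [DecidableEq n]

theorem PosSemidef.sqrt_mul_self {A : Matrix n n ℝ} (hA : A.PosSemidef) :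
    hA.sqrt * hA.sqrt = A := by
  have hU : (star hA.1.eigenvectorUnitary : Matrix n n ℝ) * hA.1.eigenvectorUnitary.1 = 1 :=
    Unitary.coe_star_mul_self _
  conv_rhs => rw [hA.1.spectral_theorem, Unitary.conjStarAlgAut_apply]
  unfold PosSemidef.sqrt
  simp only [Matrix.mul_assoc]
  rw [← Matrix.mul_assoc _ _ (diagonal _ * _), hU, Matrix.one_mul,
    ← Matrix.mul_assoc (diagonal _), diagonal_mul_diagonal]
  congr 3
  funext i
  simp [Real.mul_self_sqrt (hA.eigenvalues_nonneg i)]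

theorem PosSemidef.posSemidef_sqrt {A : Matrix n n ℝ} (hA : A.PosSemidef) :
    hA.sqrt.PosSemidef := by
  have hD : (diagonal ((↑) ∘ (√·) ∘ hA.1.eigenvalues) : Matrix n n ℝ).PosSemidef :=
    posSemidef_diagonal_iff.mpr fun i => by simp [Real.sqrt_nonneg]
  unfold PosSemidef.sqrt
  simpa [star_eq_conjTranspose] using
    hD.mul_mul_conjTranspose_same (hA.1.eigenvectorUnitary : Matrix n n ℝ)

theorem PosSemidef.trace_mul_nonneg {A B : Matrix n n ℝ} (hA : A.PosSemidef)
    (hB : B.PosSemidef) : 0 ≤ (A * B).trace := by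
  have h := (hA.conjTranspose_mul_mul_same hB.sqrt).trace_nonneg
  rwa [hB.posSemidef_sqrt.isHermitian.eq, trace_mul_cycle, hB.sqrt_mul_self, trace_mul_comm] at h

theorem two_mul_trace_le_trace_inv_mul_mul_self_add_trace {S Γ : Matrix n n ℝ}
    (hS : S.IsHermitian) (hΓ : Γ.PosDef) :
    2 * S.trace ≤ (Γ⁻¹ * (S * S)).trace + Γ.trace := by
  have hdet : IsUnit Γ.det := (isUnit_iff_isUnit_det Γ).mp hΓ.isUnit
  have hexpand : (S - Γ)ᴴ * Γ⁻¹ * (S - Γ) = S * Γ⁻¹ * S - S - S + Γ := by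
    rw [conjTranspose_sub, hS.eq, hΓ.isHermitian.eq]
    simp only [sub_mul, mul_sub, Matrix.mul_assoc, nonsing_inv_mul _ hdet,
      mul_nonsing_inv_cancel_left _ _ hdet, Matrix.mul_one]
    abel
  have h := (hΓ.inv.posSemidef.conjTranspose_mul_mul_same (S - Γ)).trace_nonneg
  rw [hexpand, trace_add, trace_sub, trace_sub, trace_mul_cycle, trace_mul_comm (S * S)] at h
  linarith

theorem trace_inv_add_smul_one_mul_mul_self_le {S : Matrix n n ℝ} (hS : S.PosSemidef) {δ : ℝ}
    (hδ : 0 < δ) : ((S + δ • 1)⁻¹ * (S * S)).trace ≤ S.trace := by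
  set Γ := S + δ • (1 : Matrix n n ℝ)
  have hΓ : Γ.PosDef := PosDef.posSemidef_add hS (PosDef.one.smul hδ)
  have hdet : IsUnit Γ.det := (isUnit_iff_isUnit_det Γ).mp hΓ.isUnit
  have hsplit : Γ⁻¹ * (S * S) = S - δ • (Γ⁻¹ * S) := by
    have hΓS : S * S = Γ * S - δ • S := by simp [Γ, Matrix.add_mul]
    rw [hΓS, Matrix.mul_sub, nonsing_inv_mul_cancel_left _ _ hdet, Matrix.mul_smul]
  rw [hsplit, trace_sub, trace_smul, smul_eq_mul]
  nlinarith [hΓ.inv.posSemidef.trace_mul_nonneg hS]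

end Matrix

/-- Lemma 1 of the paper (variational formulation of the trace norm): for every real `m × n`
matrix `M`, the infimum over positive definite `Γ` of `½ (tr (Mᵀ Γ⁻¹ M) + tr Γ)` equals
`tr ((M Mᵀ) ^ (1/2))`, the trace norm of `M`. -/
theorem sInf_trace_norm_variational
    {m n : ℕ} (M : Matrix (Fin m) (Fin n) ℝ) :
    sInf {x : ℝ | ∃ Γ : Matrix (Fin m) (Fin m) ℝ, Γ.PosDef ∧
        x = (1 / 2 : ℝ) * ((Mᵀ * Γ⁻¹ * M).trace + Γ.trace)}
      = (posSemidef_self_mul_transpose M).sqrt.trace := by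
  set T := {x : ℝ | ∃ Γ : Matrix (Fin m) (Fin m) ℝ, Γ.PosDef ∧
    x = (1 / 2 : ℝ) * ((Mᵀ * Γ⁻¹ * M).trace + Γ.trace)}
  set S := (posSemidef_self_mul_transpose M).sqrt
  have hS : S.PosSemidef := PosSemidef.posSemidef_sqrt _
  have hobjective : ∀ Γ : Matrix (Fin m) (Fin m) ℝ,
      (Mᵀ * Γ⁻¹ * M).trace = (Γ⁻¹ * (S * S)).trace := by
    intro Γ
    rw [PosSemidef.sqrt_mul_self, trace_mul_cycle, trace_mul_comm]
  have hlower : ∀ x ∈ T, S.trace ≤ x := by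
    rintro x ⟨Γ, hΓ, rfl⟩
    linarith [hobjective Γ, two_mul_trace_le_trace_inv_mul_mul_self_add_trace hS.isHermitian hΓ]
  refine le_antisymm ?_ (le_csInf ⟨_, 1, PosDef.one, rfl⟩ hlower)
  refine le_of_forall_pos_le_add fun ε hε => ?_
  set δ := ε / (m + 1)
  have hδ : 0 < δ := by positivity
  have hδm : δ * m ≤ ε := by
    rw [div_mul_eq_mul_div, div_le_iff₀ (by positivity)]
    nlinarith
  calc _ ≤ (1 / 2 : ℝ) * ((Mᵀ * (S + δ • 1)⁻¹ * M).trace + (S + δ • 1).trace) :=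
        csInf_le ⟨_, hlower⟩ ⟨_, PosDef.posSemidef_add hS (PosDef.one.smul hδ), rfl⟩
    _ ≤ S.trace + ε := by
        rw [hobjective, trace_add, trace_smul, trace_one, Fintype.card_fin, smul_eq_mul]
        linarith [trace_inv_add_smul_one_mul_mul_self_le hS hδ]
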